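/- arXiv:1604.05510 — 4 statements merged into one kernel-verified Lean document; each statement's English description precedes it below -/
import Mathlib

section
/- For every finite directed acyclic graph G with a unique sink, the visiting reversible pebbling number and the persistent reversible pebbling number satisfy vrev(G) ≤ rev(G) ≤ vrev(G) + 1. -/
/-- A finite directed graph with a designated root vertex, given by its
adjacency (edge) relation `adj u v`, meaning a directed edge from `u` to `v`. -/
structure DagSys (V : Type) where
  adj : V → V → Prop
  root : V

/-- `G` is a rooted DAG: acyclic (no directed cycle through any vertex) and
the root is its unique sink (a vertex is without out-edges iff it is the root). -/
def IsRootedDAG {V : Type} [Fintype V] (G : DagSys V) : Prop :=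
  (∀ v : V, ¬ Relation.TransGen G.adj v v) ∧
  (∀ v : V, (∀ w : V, ¬ G.adj v w) ↔ v = G.root)

/-- One legal move of the reversible pebble game on a DAG. -/
def DagPebStep {V : Type} [DecidableEq V] (G : DagSys V) (P Q : Finset V) : Prop :=
  ∃ v : V, ((v ∉ P ∧ Q = insert v P) ∨ (v ∉ Q ∧ P = insert v Q)) ∧
    ∀ u : V, G.adj u v → u ∈ P

/-- A persistent reversible pebbling of a DAG. -/
def IsDagPebbling {V : Type} [DecidableEq V] (G : DagSys V) (L : List (Finset V)) : Prop :=
  L.head? = some ∅ ∧ L.getLast? = some {G.root} ∧ L.Chain' (DagPebStep G)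

/-- A visiting reversible pebbling of a DAG. -/
def IsDagVisPebbling {V : Type} [DecidableEq V] (G : DagSys V) (L : List (Finset V)) : Prop :=
  L.head? = some ∅ ∧ L.getLast? = some ∅ ∧ (∃ P ∈ L, G.root ∈ P) ∧ L.Chain' (DagPebStep G)

/-- The space of a pebbling: the maximum number of pebbles in any configuration. -/
def dagPebSpace {V : Type} (L : List (Finset V)) : ℕ := (L.map Finset.card).foldr max 0

/-- The persistent reversible pebbling number `rev` of a DAG. -/
noncomputable def dagRevNum {V : Type} [DecidableEq V] (G : DagSys V) : ℕ :=
  sInf {k | ∃ L : List (Finset V), IsDagPebbling G L ∧ dagPebSpace L ≤ k}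

/-- The visiting reversible pebbling number `vrev` of a DAG. -/
noncomputable def dagVrevNum {V : Type} [DecidableEq V] (G : DagSys V) : ℕ :=
  sInf {k | ∃ L : List (Finset V), IsDagVisPebbling G L ∧ dagPebSpace L ≤ k}

/-! Moves are reversible because no vertex of a DAG is its own predecessor, so a persistent
pebbling followed by its reversal is a visiting pebbling of the same space. Conversely, cut a
visiting pebbling just before the first configuration containing the root `r`: no move of this
prefix touches `r`, so the prefix with `r` added to every configuration, run backwards, is legal;
it leads from the configuration following the prefix down to `{r}` with one extra pebble. -/

theorem Nat.sInf_le_sInf_add {S T : Set ℕ} {c : ℕ} (hTS : ∀ k ∈ T, k + c ∈ S)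
    (hST : S.Nonempty → T.Nonempty) : sInf S ≤ sInf T + c := by
  by_cases hT : T.Nonempty
  · exact Nat.sInf_le (hTS _ (Nat.sInf_mem hT))
  · simp [Set.not_nonempty_iff_eq_empty.mp (mt hST hT)]

namespace List

variable {α : Type*} {R : α → α → Prop}

theorem IsChain.reverse_of_symm (hR : ∀ ⦃a b⦄, R a b → R b a) {l : List α}
    (h : l.IsChain R) : l.reverse.IsChain R :=
  isChain_reverse.mpr (h.imp fun _ _ hab => hR hab)

theorem IsChain.append_cons_reverse (hR : ∀ ⦃a b⦄, R a b → R b a) {l : List α} {a : α}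
    (h : (l ++ [a]).IsChain R) : (l ++ a :: l.reverse).IsChain R := by
  obtain ⟨hl, -, hla⟩ := isChain_append.mp h
  rw [← singleton_append, ← append_assoc]
  refine h.append (hl.reverse_of_symm hR) fun x hx y hy => ?_
  obtain rfl : a = x := by simpa using hx
  rw [head?_reverse] at hy
  exact hR (hla y hy a rfl)

theorem getLast?_append_cons_reverse (l : List α) (a : α) :
    (l ++ a :: l.reverse).getLast? = (l ++ [a]).head? := by
  rw [← head?_reverse]
  simp

end List

section Pebbling

variable {V : Type} {G : DagSys V} {P Q : Finset V} {a : V}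

theorem dagPebSpace_le_iff {L : List (Finset V)} {k : ℕ} :
    dagPebSpace L ≤ k ↔ ∀ P ∈ L, P.card ≤ k := by
  induction L with
  | nil => simp [dagPebSpace]
  | cons P L ih =>
    simp only [dagPebSpace, List.map_cons, List.foldr_cons] at ih ⊢
    rw [Nat.max_le, ih, List.forall_mem_cons]

theorem card_le_dagPebSpace {L : List (Finset V)} (hP : P ∈ L) : P.card ≤ dagPebSpace L :=
  dagPebSpace_le_iff.mp le_rfl P hP

theorem IsRootedDAG.irrefl [Fintype V] (hG : IsRootedDAG G) (v : V) : ¬ G.adj v v :=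
  fun h => hG.1 v (.single h)

variable [DecidableEq V]

theorem DagPebStep.symm (hirr : ∀ v, ¬ G.adj v v) (h : DagPebStep G P Q) :
    DagPebStep G Q P := by
  obtain ⟨v, ⟨hvP, rfl⟩ | ⟨hvQ, rfl⟩, hpred⟩ := h
  · exact ⟨v, .inr ⟨hvP, rfl⟩, fun u hu => Finset.mem_insert_of_mem (hpred u hu)⟩
  · refine ⟨v, .inl ⟨hvQ, rfl⟩, fun u hu => ?_⟩
    exact (Finset.mem_insert.mp (hpred u hu)).resolve_left (by rintro rfl; exact hirr u hu)

theorem DagPebStep.insert_of_notMem (h : DagPebStep G P Q) (hP : a ∉ P) (hQ : a ∉ Q) :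
    DagPebStep G (insert a P) (insert a Q) := by
  obtain ⟨v, hmove, hpred⟩ := h
  have hva : v ≠ a := by
    rintro rfl
    rcases hmove with ⟨-, rfl⟩ | ⟨-, rfl⟩ <;> simp_all
  refine ⟨v, ?_, fun u hu => Finset.mem_insert_of_mem (hpred u hu)⟩
  rcases hmove with ⟨hvP, rfl⟩ | ⟨hvQ, rfl⟩
  · exact .inl ⟨by simp [hva, hvP], Finset.insert_comm _ _ _⟩
  · exact .inr ⟨by simp [hva, hvQ], Finset.insert_comm _ _ _⟩

theorem DagPebStep.eq_insert (h : DagPebStep G P Q) (hP : a ∉ P) (hQ : a ∈ Q) :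
    Q = insert a P := by
  obtain ⟨v, ⟨-, rfl⟩ | ⟨-, rfl⟩, -⟩ := h
  · rw [Finset.mem_insert.mp hQ |>.resolve_right hP]
  · exact absurd (Finset.mem_insert_of_mem hQ) hP

theorem IsDagPebbling.exists_isDagVisPebbling (hirr : ∀ v, ¬ G.adj v v)
    {L : List (Finset V)} (hL : IsDagPebbling G L) :
    ∃ L', IsDagVisPebbling G L' ∧ dagPebSpace L' ≤ dagPebSpace L := by
  obtain ⟨h0, hlast, hchain⟩ := hL
  obtain ⟨l, rfl⟩ := List.getLast?_eq_some_iff.mp hlast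
  refine ⟨l ++ {G.root} :: l.reverse, ⟨?_, ?_, ⟨{G.root}, by simp, by simp⟩,
    hchain.append_cons_reverse fun _ _ => DagPebStep.symm hirr⟩, ?_⟩
  · simpa using h0
  · rw [List.getLast?_append_cons_reverse, h0]
  · refine dagPebSpace_le_iff.mpr fun P hP => card_le_dagPebSpace ?_
    simp only [List.mem_append, List.mem_cons, List.mem_reverse] at hP ⊢
    tauto

theorem IsDagVisPebbling.exists_isDagPebbling (hirr : ∀ v, ¬ G.adj v v)
    {L : List (Finset V)} (hL : IsDagVisPebbling G L) :
    ∃ L', IsDagPebbling G L' ∧ dagPebSpace L' ≤ dagPebSpace L + 1 := by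
  obtain ⟨h0, -, ⟨P, hPL, hrP⟩, hchain⟩ := hL
  obtain ⟨Q, hQ⟩ := Option.isSome_iff_exists.mp
    (List.find?_isSome.mpr ⟨P, hPL, decide_eq_true hrP⟩ : (L.find? (G.root ∈ ·)).isSome)
  obtain ⟨hrQ, s, t, rfl, hs⟩ := List.find?_eq_some_iff_append.mp hQ
  simp only [decide_eq_true_eq, Bool.not_eq_true', decide_eq_false_iff_not] at hrQ hs
  have hs0 : s.head? = some ∅ := by
    cases s with
    | nil => simp_all
    | cons P s => simpa using h0
  obtain ⟨hsChain, -, hsQ⟩ := List.isChain_append.mp hchain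
  have hsUp : (s.map (insert G.root)).IsChain (DagPebStep G) :=
    List.isChain_map _ |>.mpr <| hsChain.imp_of_mem_imp fun P P' hP hP' h =>
      h.insert_of_notMem (hs P hP) (hs P' hP')
  refine ⟨s ++ (s.map (insert G.root)).reverse, ⟨by simp [hs0], by simp [hs0], ?_⟩, ?_⟩
  · refine hsChain.append (hsUp.reverse_of_symm fun _ _ => DagPebStep.symm hirr) ?_
    intro P hP P' hP'
    simp only [List.head?_reverse, List.getLast?_map, Option.mem_def, Option.map_eq_some_iff] at hP'
    obtain ⟨P'', hP'', rfl⟩ := hP'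
    obtain rfl : P = P'' := Option.some_inj.mp (hP.symm.trans hP'')
    have hPQ := hsQ P hP Q rfl
    rwa [← hPQ.eq_insert (hs P (List.mem_of_mem_getLast? hP)) hrQ]
  · refine dagPebSpace_le_iff.mpr fun P hP => ?_
    simp only [List.mem_append, List.mem_reverse, List.mem_map] at hP
    rcases hP with hP | ⟨P, hP, rfl⟩
    · exact (card_le_dagPebSpace (List.mem_append_left _ hP)).trans (Nat.le_succ _)
    · exact (Finset.card_insert_le _ _).trans
        (Nat.succ_le_succ (card_le_dagPebSpace (List.mem_append_left _ hP)))

end Pebbling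

/-- For every finite directed acyclic graph `G` with a unique
sink, `vrev(G) ≤ rev(G) ≤ vrev(G) + 1`. -/
theorem vrev_le_rev_le_vrev_add_one {V : Type} [Fintype V] [DecidableEq V]
    (G : DagSys V) (hG : IsRootedDAG G) :
    dagVrevNum G ≤ dagRevNum G ∧ dagRevNum G ≤ dagVrevNum G + 1 := by
  have vis_of_rev (k : ℕ) : (∃ L, IsDagPebbling G L ∧ dagPebSpace L ≤ k) →
      ∃ L, IsDagVisPebbling G L ∧ dagPebSpace L ≤ k := fun ⟨_, hL, hk⟩ =>
    let ⟨L', hL', hspace⟩ := hL.exists_isDagVisPebbling hG.irrefl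
    ⟨L', hL', hspace.trans hk⟩
  have rev_of_vis (k : ℕ) : (∃ L, IsDagVisPebbling G L ∧ dagPebSpace L ≤ k) →
      ∃ L, IsDagPebbling G L ∧ dagPebSpace L ≤ k + 1 := fun ⟨_, hL, hk⟩ =>
    let ⟨L', hL', hspace⟩ := hL.exists_isDagPebbling hG.irrefl
    ⟨L', hL', hspace.trans (Nat.succ_le_succ hk)⟩
  exact ⟨Nat.sInf_le_sInf_add (c := 0) vis_of_rev fun ⟨k, hk⟩ => ⟨k + 1, rev_of_vis k hk⟩,
    Nat.sInf_le_sInf_add rev_of_vis fun ⟨k, hk⟩ => ⟨k, vis_of_rev k hk⟩⟩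
end

section
/- For every finite undirected tree U, the contraction number of U equals the edge rank coloring number of U, i.e., contr(U) = erank(U). -/
/-- A matching sequence of length `s` for the graph `U`, encoded by the
equivalence relations `R i` whose classes are the vertices of the `i`-th
contracted tree `T_{i+1}`.  `R 0` is equality (`T₁ = U`), `R s` is the total
relation (single node), each step only merges classes (monotone), classes that
get merged in a step are joined by an edge of `U` (so they are adjacent in the
current contracted tree), and each step merges classes in pairs — i.e. each
new class is a union of at most two old classes — so each step contracts a
matching of the current tree. -/
def IsMatchingSeq {V : Type} (U : SimpleGraph V) (s : ℕ) (R : ℕ → V → V → Prop) : Prop :=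
  (∀ i : ℕ, i ≤ s → Equivalence (R i)) ∧
  (∀ x y : V, R 0 x y ↔ x = y) ∧
  (∀ x y : V, R s x y) ∧
  (∀ i : ℕ, i < s → ∀ x y : V, R i x y → R (i + 1) x y) ∧
  (∀ i : ℕ, i < s → ∀ x y : V, R (i + 1) x y → ¬ R i x y →
      ∃ a b : V, R i x a ∧ R i y b ∧ U.Adj a b) ∧
  (∀ i : ℕ, i < s → ∀ x y z : V, R (i + 1) x y → R (i + 1) y z →
      ¬ R i x y → ¬ R i y z → R i x z)

/-- The contraction number `contr` of `U`: the least length of a matching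
sequence contracting `U` to a single node. -/
noncomputable def contrNum {V : Type} (U : SimpleGraph V) : ℕ :=
  sInf {s | ∃ R : ℕ → V → V → Prop, IsMatchingSeq U s R}

/-- `c` is an edge rank coloring of `G` with the `k` colors `{1, …, k}`:
every edge gets a color in `{1, …, k}`, and whenever two distinct edges get
the same color, every path containing both of them contains an edge of
strictly larger color (for a tree this says that the path between the two
edges contains an edge of larger color). -/
def IsEdgeRankColoring {V : Type} (G : SimpleGraph V) (k : ℕ) (c : Sym2 V → ℕ) : Prop :=
  (∀ e ∈ G.edgeSet, c e ∈ Finset.Icc 1 k) ∧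
  (∀ e ∈ G.edgeSet, ∀ f ∈ G.edgeSet, e ≠ f → c e = c f →
    ∀ (x y : V) (p : G.Walk x y), p.IsPath → e ∈ p.edges → f ∈ p.edges →
      ∃ g ∈ p.edges, c e < c g)

/-- The edge rank coloring number `erank` of `G`: the least number of colors
in an edge rank coloring. -/
noncomputable def erankNum {V : Type} (G : SimpleGraph V) : ℕ :=
  sInf {k | ∃ c : Sym2 V → ℕ, IsEdgeRankColoring G k c}

/-!
An edge rank coloring `c` with `k` colors yields a matching sequence of length `k`: after step
`i`, the classes are the components of the edges of color at most `i`. Step `i + 1` contracts the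
edges of color `i + 1`, and these form a matching of the contracted tree, since two of them meeting
one class would lie on a path whose colors are at most `i + 1`.

Conversely, a matching sequence of length `s` yields an edge rank coloring with `s` colors: color
an edge by the step at which its endpoints are merged. If two edges merged at step `i + 1` lay on a
path of colors at most `i + 1`, they would lie in one class after step `i + 1`; this class is the
union of at most two classes after step `i`, each connected, which joined by two edges would close
a cycle.
-/

namespace SimpleGraph

variable {V : Type} {G H : SimpleGraph V}

lemma IsAcyclic.mk_mem_edges_of_adj (hG : G.IsAcyclic) {u v : V} (huv : G.Adj u v)
    (p : G.Walk u v) : s(u, v) ∈ p.edges :=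
  isBridge_iff_forall_walk_mem_edges.mp (isAcyclic_iff_forall_adj_isBridge.mp hG huv) p

lemma reachable_deleteEdges_iff_exists_isPath {s : Set (Sym2 V)} {x y : V} :
    (G.deleteEdges s).Reachable x y ↔ ∃ p : G.Walk x y, p.IsPath ∧ ∀ e ∈ p.edges, e ∉ s := by
  classical
  constructor
  · rintro ⟨q⟩
    refine ⟨(q.mapLe (deleteEdges_le s)).bypass, Walk.bypass_isPath _, fun e he => ?_⟩
    have he' : e ∈ q.edges :=
      Walk.edges_mapLe_eq_edges _ _ ▸ Walk.edges_bypass_subset_edges _ he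
    exact (edgeSet_deleteEdges s ▸ q.edges_subset_edgeSet he').2
  · rintro ⟨p, -, hp⟩
    exact ⟨p.toDeleteEdges s hp⟩

lemma Walk.reachable_deleteEdges_of_mem_support {s : Set (Sym2 V)} {x y v : V}
    (p : G.Walk x y) (hp : ∀ e ∈ p.edges, e ∉ s) (hv : v ∈ p.support) :
    (G.deleteEdges s).Reachable x v := by
  classical
  exact ⟨(p.toDeleteEdges s hp).takeUntil v (by simpa using hv)⟩

lemma Walk.exists_reachable_of_edges_subset {x y : V} (p : G.Walk x y) {e : Sym2 V}
    (hp : ∀ f ∈ p.edges, f ≠ e → f ∈ H.edgeSet) (hxy : ¬ H.Reachable x y) :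
    ∃ a b, s(a, b) = e ∧ H.Reachable x a ∧ H.Reachable b y := by
  induction p with
  | nil => exact absurd .rfl hxy
  | @cons u w y huw q ih =>
    have hq : ∀ f ∈ q.edges, f ≠ e → f ∈ H.edgeSet :=
      fun f hf => hp f (by simp [hf])
    by_cases hwy : H.Reachable w y
    · by_cases he : s(u, w) = e
      · exact ⟨u, w, he, .rfl, hwy⟩
      · exact absurd ((H.mem_edgeSet.mp (hp _ (by simp) he)).reachable.trans hwy) hxy
    obtain ⟨a, b, hab, hwa, hby⟩ := ih hq hwy
    by_cases he : s(u, w) = e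
    · rw [← hab, Sym2.eq_iff] at he
      rcases he with ⟨rfl, rfl⟩ | ⟨rfl, rfl⟩
      · exact absurd hby hwy
      · exact absurd hby hxy
    · exact ⟨a, b, hab, (H.mem_edgeSet.mp (hp _ (by simp) he)).reachable.trans hwa, hby⟩

end SimpleGraph

open SimpleGraph

namespace IsEdgeRankColoring

variable {V : Type} {U : SimpleGraph V} {k : ℕ} {c : Sym2 V → ℕ}

lemma exists_of_finite [Finite V] (G : SimpleGraph V) : ∃ k c, IsEdgeRankColoring G k c := by
  obtain ⟨k, ⟨σ⟩⟩ := Finite.exists_equiv_fin (Sym2 V)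
  refine ⟨k, fun e => σ e + 1, fun e _ => ?_, fun e _ f _ hef hc => ?_⟩
  · simp only [Finset.mem_Icc]
    omega
  · exact absurd (σ.injective (Fin.ext (Nat.succ_injective hc))) hef

lemma eq_of_mem_edges (hc : IsEdgeRankColoring U k c) {x y : V} {p : U.Walk x y}
    (hp : p.IsPath) {n : ℕ} (hmax : ∀ g ∈ p.edges, c g ≤ n) {e f : Sym2 V}
    (he : e ∈ p.edges) (hf : f ∈ p.edges) (hce : c e = n) (hcf : c f = n) : e = f := by
  by_contra hef
  obtain ⟨g, hg, hlt⟩ := hc.2 e (p.edges_subset_edgeSet he) f (p.edges_subset_edgeSet hf) hef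
    (hce.trans hcf.symm) x y p hp he hf
  exact absurd (hmax g hg) (by omega)

end IsEdgeRankColoring

section Sublevel

variable {V : Type}

def sublevelGraph (U : SimpleGraph V) (c : Sym2 V → ℕ) (i : ℕ) : SimpleGraph V :=
  U.deleteEdges {e | i < c e}

variable {U : SimpleGraph V} {k : ℕ} {c : Sym2 V → ℕ}

lemma reachable_sublevelGraph_iff {i : ℕ} {x y : V} :
    (sublevelGraph U c i).Reachable x y ↔ ∃ p : U.Walk x y, p.IsPath ∧ ∀ e ∈ p.edges, c e ≤ i := by
  simp only [sublevelGraph, reachable_deleteEdges_iff_exists_isPath, Set.mem_ofPred_eq, not_lt]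

lemma sublevelGraph_zero (hc : IsEdgeRankColoring U k c) : sublevelGraph U c 0 = ⊥ := by
  ext x y
  simp only [sublevelGraph, deleteEdges_adj, Set.mem_ofPred_eq, bot_adj, iff_false, not_and,
    not_not]
  exact fun h => (Finset.mem_Icc.mp (hc.1 _ h)).1

lemma le_sublevelGraph (hc : IsEdgeRankColoring U k c) : U ≤ sublevelGraph U c k :=
  fun _ _ h => deleteEdges_adj.mpr ⟨h, not_lt.mpr (Finset.mem_Icc.mp (hc.1 _ h)).2⟩

lemma sublevelGraph_mono {i j : ℕ} (h : i ≤ j) : sublevelGraph U c i ≤ sublevelGraph U c j :=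
  deleteEdges_anti fun _ he => lt_of_le_of_lt h he

lemma exists_adj_of_reachable_sublevelGraph_succ (hc : IsEdgeRankColoring U k c) {i : ℕ}
    {x y : V} (h : (sublevelGraph U c (i + 1)).Reachable x y)
    (hn : ¬ (sublevelGraph U c i).Reachable x y) :
    ∃ a b, U.Adj a b ∧ c s(a, b) = i + 1 ∧
      (sublevelGraph U c i).Reachable x a ∧ (sublevelGraph U c i).Reachable b y := by
  obtain ⟨p, hp, hle⟩ := reachable_sublevelGraph_iff.mp h
  obtain ⟨e, he, hei⟩ : ∃ e ∈ p.edges, i < c e := by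
    by_contra! hall
    exact hn (reachable_sublevelGraph_iff.mpr ⟨p, hp, hall⟩)
  have hce : c e = i + 1 := by have := hle e he; omega
  have hother : ∀ f ∈ p.edges, f ≠ e → f ∈ (sublevelGraph U c i).edgeSet := by
    intro f hf hfe
    refine (edgeSet_deleteEdges _).symm ▸ ⟨p.edges_subset_edgeSet hf, fun (hfi : i < c f) => ?_⟩
    exact hfe (hc.eq_of_mem_edges hp hle hf he (by have := hle f hf; omega) hce)
  obtain ⟨a, b, rfl, hxa, hby⟩ := p.exists_reachable_of_edges_subset hother hn
  exact ⟨a, b, p.edges_subset_edgeSet he, hce, hxa, hby⟩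

lemma reachable_sublevelGraph_of_reachable_succ (hc : IsEdgeRankColoring U k c) {i : ℕ}
    {x y z : V} (hxy : (sublevelGraph U c (i + 1)).Reachable x y)
    (hyz : (sublevelGraph U c (i + 1)).Reachable y z)
    (hnxy : ¬ (sublevelGraph U c i).Reachable x y)
    (hnyz : ¬ (sublevelGraph U c i).Reachable y z) :
    (sublevelGraph U c i).Reachable x z := by
  by_contra hnxz
  obtain ⟨a, b, hab, hcab, hxa, hby⟩ := exists_adj_of_reachable_sublevelGraph_succ hc hxy hnxy
  obtain ⟨a', b', hab', hcab', hya', hb'z⟩ :=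
    exists_adj_of_reachable_sublevelGraph_succ hc hyz hnyz
  obtain ⟨q, hq, hqle⟩ := reachable_sublevelGraph_iff.mp (hby.trans hya')
  have hq_supp : ∀ v ∈ q.support, (sublevelGraph U c i).Reachable y v := fun v hv =>
    hby.symm.trans (q.reachable_deleteEdges_of_mem_support (fun e he => not_lt.mpr (hqle e he)) hv)
  have ha : a ∉ q.support := fun hv => hnxy (hxa.trans (hq_supp a hv).symm)
  have hb' : b' ∉ q.support := fun hv => hnyz ((hq_supp b' hv).trans hb'z)
  have hab'_ne : a ≠ b' := by rintro rfl; exact hnxz (hxa.trans hb'z)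
  -- the path `a b ⋯ a' b'` contains two distinct edges of the maximal color `i + 1`
  let p : U.Walk a b' := .cons hab (q.concat hab')
  have hp : p.IsPath := by
    refine (hq.concat hb' hab').cons ?_
    simpa [Walk.support_concat] using ⟨ha, hab'_ne⟩
  have hple : ∀ e ∈ p.edges, c e ≤ i + 1 := by
    simp only [p, Walk.edges_cons, Walk.edges_concat, List.concat_eq_append, List.mem_cons,
      List.mem_append, List.not_mem_nil, or_false]
    rintro e (rfl | he | rfl)
    exacts [hcab.le, (hqle e he).trans i.le_succ, hcab'.le]
  have hne : s(a, b) ≠ s(a', b') := by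
    intro h
    rcases Sym2.eq_iff.mp h with ⟨rfl, -⟩ | ⟨rfl, -⟩
    · exact hnxy (hxa.trans hya'.symm)
    · exact hab'_ne rfl
  exact hne (hc.eq_of_mem_edges hp hple (by simp [p]) (by simp [p, Walk.edges_concat]) hcab hcab')

lemma isMatchingSeq_sublevelGraph (hU : U.Connected) (hc : IsEdgeRankColoring U k c) :
    IsMatchingSeq U k fun i => (sublevelGraph U c i).Reachable := by
  refine ⟨fun _ _ => reachable_is_equivalence _, fun x y => ?_, fun x y => ?_,
    fun i _ x y h => h.mono (sublevelGraph_mono i.le_succ), fun i _ x y h hn => ?_,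
    fun i _ x y z => reachable_sublevelGraph_of_reachable_succ hc⟩
  · simp only [sublevelGraph_zero hc, reachable_bot]
  · exact (hU.preconnected x y).mono (le_sublevelGraph hc)
  · obtain ⟨a, b, hab, -, hxa, hby⟩ := exists_adj_of_reachable_sublevelGraph_succ hc h hn
    exact ⟨a, b, hxa, hby.symm, hab⟩

end Sublevel

namespace IsMatchingSeq

variable {V : Type} {U : SimpleGraph V} {s : ℕ} {R : ℕ → V → V → Prop}

lemma mono (hR : IsMatchingSeq U s R) {j k : ℕ} (hjk : j ≤ k) (hks : k ≤ s) {x y : V}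
    (h : R j x y) : R k x y := by
  induction k, hjk using Nat.le_induction with
  | base => exact h
  | succ k _ ih => exact hR.2.2.2.1 k hks x y (ih (k.le_succ.trans hks))

lemma exists_walk_support_rel (hR : IsMatchingSeq U s R) {i : ℕ} (his : i ≤ s) {x y : V}
    (h : R i x y) : ∃ p : U.Walk x y, ∀ v ∈ p.support, R i x v := by
  obtain ⟨hequiv, hzero, -, hmono, hmerge, -⟩ := hR
  induction i generalizing x y with
  | zero =>
    obtain rfl := (hzero x y).mp h
    exact ⟨.nil, by simp [hzero]⟩
  | succ i ih =>
    have his' := i.le_succ.trans his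
    by_cases hi : R i x y
    · obtain ⟨p, hp⟩ := ih his' hi
      exact ⟨p, fun v hv => hmono i his x v (hp v hv)⟩
    obtain ⟨a, b, hxa, hyb, hab⟩ := hmerge i his x y h hi
    obtain ⟨p, hp⟩ := ih his' hxa
    obtain ⟨q, hq⟩ := ih his' hyb
    refine ⟨p.append (.cons hab q.reverse), fun v hv => ?_⟩
    simp only [Walk.mem_support_append_iff, Walk.support_cons, Walk.support_reverse,
      List.mem_cons, List.mem_reverse] at hv
    rcases hv with hv | rfl | hv
    · exact hmono i his x v (hp v hv)
    · exact hmono i his x v (hp v p.end_mem_support)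
    · exact (hequiv _ his).trans h (hmono i his y v (hq v hv))

lemma rel_or_rel_of_rel_succ (hR : IsMatchingSeq U s R) {i : ℕ} (his : i < s) {u v x : V}
    (huv : R (i + 1) u v) (hnuv : ¬ R i u v) (hux : R (i + 1) u x) : R i u x ∨ R i v x := by
  by_cases hvx : R i v x
  · exact .inr hvx
  · exact .inl (hR.2.2.2.2.2 i his u v x huv ((hR.1 _ his).trans ((hR.1 _ his).symm huv) hux)
      hnuv hvx)

/-- Classes of `R i` are connected, so in a tree two of them are joined by at most one edge. -/
lemma mk_eq_of_rel_of_rel (hU : U.IsAcyclic) (hR : IsMatchingSeq U s R) {i : ℕ} (his : i ≤ s)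
    {u v x y : V} (huv : U.Adj u v) (hxy : U.Adj x y) (hnuv : ¬ R i u v) (hux : R i u x)
    (hvy : R i v y) : s(u, v) = s(x, y) := by
  obtain ⟨p, hp⟩ := hR.exists_walk_support_rel his hux
  obtain ⟨q, hq⟩ := hR.exists_walk_support_rel his hvy
  have hmem := hU.mk_mem_edges_of_adj huv (p.append (.cons hxy q.reverse))
  simp only [Walk.edges_append, Walk.edges_cons, Walk.edges_reverse, List.mem_append,
    List.mem_cons, List.mem_reverse] at hmem
  rcases hmem with hmem | hmem | hmem
  · exact absurd (hp v (p.snd_mem_support_of_mem_edges hmem)) hnuv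
  · exact hmem
  · exact absurd ((hR.1 i his).symm (hq u (q.fst_mem_support_of_mem_edges hmem))) hnuv

lemma mk_eq_of_rel_succ (hU : U.IsAcyclic) (hR : IsMatchingSeq U s R) {i : ℕ} (his : i < s)
    {u v x y : V} (huv : U.Adj u v) (hxy : U.Adj x y) (hnuv : ¬ R i u v) (hnxy : ¬ R i x y)
    (huv' : R (i + 1) u v) (hux : R (i + 1) u x) (huy : R (i + 1) u y) : s(u, v) = s(x, y) := by
  have hequiv := hR.1 i his.le
  rcases hR.rel_or_rel_of_rel_succ his huv' hnuv hux with hux | hvx <;>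
  rcases hR.rel_or_rel_of_rel_succ his huv' hnuv huy with huy | hvy
  · exact absurd (hequiv.trans (hequiv.symm hux) huy) hnxy
  · exact hR.mk_eq_of_rel_of_rel hU his.le huv hxy hnuv hux hvy
  · exact (hR.mk_eq_of_rel_of_rel hU his.le huv hxy.symm hnuv huy hvx).trans Sym2.eq_swap
  · exact absurd (hequiv.trans (hequiv.symm hvx) hvy) hnxy

end IsMatchingSeq

section ContractionStep

variable {V : Type} {U : SimpleGraph V} {s : ℕ} {R : ℕ → V → V → Prop}

noncomputable def contractionStep (R : ℕ → V → V → Prop) (e : Sym2 V) : ℕ :=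
  sInf {m | ∀ x ∈ e, ∀ y ∈ e, R m x y}

lemma contractionStep_le (hR : IsMatchingSeq U s R) (e : Sym2 V) : contractionStep R e ≤ s :=
  Nat.sInf_le fun x _ y _ => hR.2.2.1 x y

lemma rel_contractionStep (hR : IsMatchingSeq U s R) (u v : V) :
    R (contractionStep R s(u, v)) u v :=
  Nat.sInf_mem (s := {m | ∀ x ∈ s(u, v), ∀ y ∈ s(u, v), R m x y}) ⟨s, fun x _ y _ => hR.2.2.1 x y⟩
    u (Sym2.mem_mk_left u v) v (Sym2.mem_mk_right u v)

lemma not_rel_of_lt_contractionStep (hR : IsMatchingSeq U s R) {u v : V} {j : ℕ}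
    (hj : j < contractionStep R s(u, v)) : ¬ R j u v := by
  intro huv
  have hequiv := hR.1 j (hj.le.trans (contractionStep_le hR _))
  refine Nat.notMem_of_lt_sInf hj fun a ha b hb => ?_
  rcases Sym2.mem_iff.mp ha with rfl | rfl <;> rcases Sym2.mem_iff.mp hb with rfl | rfl
  exacts [hequiv.refl _, huv, hequiv.symm huv, hequiv.refl _]

lemma one_le_contractionStep (hR : IsMatchingSeq U s R) {u v : V} (huv : U.Adj u v) :
    1 ≤ contractionStep R s(u, v) :=
  Nat.one_le_iff_ne_zero.mpr fun h => huv.ne ((hR.2.1 u v).mp (h ▸ rel_contractionStep hR u v))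

lemma rel_of_forall_contractionStep_le (hR : IsMatchingSeq U s R) {m : ℕ} (hms : m ≤ s)
    {x y : V} (p : U.Walk x y) (hp : ∀ e ∈ p.edges, contractionStep R e ≤ m) :
    ∀ v ∈ p.support, R m x v := by
  induction p with
  | nil => simpa using (hR.1 m hms).refl _
  | @cons a b y hab q ih =>
    have hRab : R m a b := hR.mono (hp _ (by simp)) hms (rel_contractionStep hR a b)
    simp only [Walk.support_cons, List.mem_cons, forall_eq_or_imp]
    exact ⟨(hR.1 m hms).refl _, fun v hv =>
      (hR.1 m hms).trans hRab (ih (fun e he => hp e (by simp [he])) v hv)⟩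

lemma isEdgeRankColoring_contractionStep (hU : U.IsAcyclic) (hR : IsMatchingSeq U s R) :
    IsEdgeRankColoring U s (contractionStep R) := by
  refine ⟨fun e he => ?_, fun e he f hf hef hcef x₀ y₀ p hp hep hfp => ?_⟩
  · induction e with
    | h u v => exact Finset.mem_Icc.mpr ⟨one_le_contractionStep hR he, contractionStep_le hR _⟩
  induction e with | h u v => ?_
  induction f with | h x y => ?_
  by_contra! hle
  obtain ⟨i, hi⟩ : ∃ i, contractionStep R s(u, v) = i + 1 :=
    Nat.exists_eq_add_one.mpr (one_le_contractionStep hR he)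
  have his : i < s := by have := contractionStep_le hR s(u, v); omega
  have hrel : ∀ w ∈ p.support, R (i + 1) x₀ w :=
    rel_of_forall_contractionStep_le hR his p fun e he => (hle e he).trans hi.le
  have hequiv := hR.1 (i + 1) his
  have hrel_u : ∀ w ∈ p.support, R (i + 1) u w := fun w hw =>
    hequiv.trans (hequiv.symm (hrel u (p.fst_mem_support_of_mem_edges hep))) (hrel w hw)
  exact hef (hR.mk_eq_of_rel_succ hU his (U.mem_edgeSet.mp he) (U.mem_edgeSet.mp hf)
    (not_rel_of_lt_contractionStep hR (by omega)) (not_rel_of_lt_contractionStep hR (by omega))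
    (hrel_u v (p.snd_mem_support_of_mem_edges hep)) (hrel_u x (p.fst_mem_support_of_mem_edges hfp))
    (hrel_u y (p.snd_mem_support_of_mem_edges hfp)))

end ContractionStep

/-- For every finite undirected tree `U`,
`contr(U) = erank(U)`. -/
theorem contr_eq_erank {V : Type} [Fintype V] (U : SimpleGraph V)
    (hU : U.IsTree) : contrNum U = erankNum U := by
  obtain ⟨k, c₀, hc₀⟩ := IsEdgeRankColoring.exists_of_finite U
  obtain ⟨c, hc⟩ : erankNum U ∈ {k | ∃ c, IsEdgeRankColoring U k c} := Nat.sInf_mem ⟨k, c₀, hc₀⟩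
  have hseq := isMatchingSeq_sublevelGraph hU.connected hc
  obtain ⟨R, hR⟩ : contrNum U ∈ {s | ∃ R, IsMatchingSeq U s R} := Nat.sInf_mem ⟨_, _, hseq⟩
  exact le_antisymm (Nat.sInf_le ⟨_, hseq⟩)
    (Nat.sInf_le ⟨_, isEdgeRankColoring_contractionStep hU.isAcyclic hR⟩)
end

section
/- If T₁ and T₂ are rooted directed trees whose underlying undirected trees are isomorphic, then rev(T₁) = rev(T₂). In other words, the persistent reversible pebbling number of a rooted directed tree does not depend on the orientation of its edges or the choice of root. -/
/-- A system for pebbling: a finite directed tree given by a root and a parent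
function (edges are directed from each non-root vertex to its parent, i.e.
toward the root). -/
structure PebSys (V : Type) where
  root : V
  parent : V → V

/-- `T` is a genuine rooted directed tree: the root is a fixed point of the
parent map and every vertex reaches the root by iterating the parent map. -/
def IsRDTree {V : Type} [Fintype V] (T : PebSys V) : Prop :=
  T.parent T.root = T.root ∧ ∀ v : V, ∃ k : ℕ, T.parent^[k] v = T.root

/-- One legal move of the reversible pebble game, from configuration `P` to
configuration `Q`: exactly one vertex `v` is pebbled or unpebbled, and all
in-neighbours of `v` (vertices `u ≠ v` with `parent u = v`) carry pebbles
in `P`. -/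
def PebStep {V : Type} [DecidableEq V] (T : PebSys V) (P Q : Finset V) : Prop :=
  ∃ v : V, ((v ∉ P ∧ Q = insert v P) ∨ (v ∉ Q ∧ P = insert v Q)) ∧
    ∀ u : V, u ≠ v → T.parent u = v → u ∈ P

/-- A persistent reversible pebbling: starts with no pebbles, ends with a
pebble exactly on the root, consecutive configurations are legal moves. -/
def IsPebbling {V : Type} [DecidableEq V] (T : PebSys V) (L : List (Finset V)) : Prop :=
  L.head? = some ∅ ∧ L.getLast? = some {T.root} ∧ L.Chain' (PebStep T)

/-- A visiting reversible pebbling: starts and ends with no pebbles, and the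
root carries a pebble at some point. -/
def IsVisPebbling {V : Type} [DecidableEq V] (T : PebSys V) (L : List (Finset V)) : Prop :=
  L.head? = some ∅ ∧ L.getLast? = some ∅ ∧ (∃ P ∈ L, T.root ∈ P) ∧ L.Chain' (PebStep T)

/-- The space of a pebbling: the maximum number of pebbles in any configuration. -/
def pebSpace {V : Type} (L : List (Finset V)) : ℕ := (L.map Finset.card).foldr max 0

/-- The persistent reversible pebbling number `rev`. -/
noncomputable def revNum {V : Type} [DecidableEq V] (T : PebSys V) : ℕ :=
  sInf {k | ∃ L : List (Finset V), IsPebbling T L ∧ pebSpace L ≤ k}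

/-- The visiting reversible pebbling number `vrev`. -/
noncomputable def vrevNum {V : Type} [DecidableEq V] (T : PebSys V) : ℕ :=
  sInf {k | ∃ L : List (Finset V), IsVisPebbling T L ∧ pebSpace L ≤ k}

/-- The underlying undirected graph of a rooted directed tree: `u` and `v` are
adjacent iff one is the parent of the other. -/
def undirG {V : Type} (T : PebSys V) : SimpleGraph V :=
  SimpleGraph.fromRel (fun u v => T.parent u = v)

/-!
Rerooting `T` at a child `c` of its root `r` does not increase the space needed. In a pebbling
of `T`, let `C` be the configuration just before `r` is pebbled for the last time, and `D` one
just before `c` is unpebbled later on. For the rerooted tree, pebble `D \ {c}` as `T` does but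
ignoring `c`, add `c` (its new child `r` is on `D`), run the pebbling of `T` backwards from `D`
to `insert r C` (legal, as `r` stays pebbled), remove `r`, and finally replay the pebbling of
`T` from `insert r C` to `{r}` with `c` standing in for `r`. Rerooting is reversible, and a
rooted tree is determined by its undirected graph and its root, so walking the root along a path
of the tree connects any two orientations of it.
-/

open Relation

theorem Relation.ReflTransGen.exists_last_entry {α : Type*} {r : α → α → Prop}
    {p : α → Prop} {a b : α} (h : ReflTransGen r a b) (ha : ¬p a) (hb : p b) :
    ∃ c d, ReflTransGen r a c ∧ ¬p c ∧ r c d ∧ p d ∧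
      ReflTransGen (fun x y => r x y ∧ p x ∧ p y) d b := by
  induction h with
  | refl => exact absurd hb ha
  | @tail c b hac hcb ih =>
    by_cases hc : p c
    · obtain ⟨c', d, hac', hc', hcd, hd, hdc⟩ := ih hc
      exact ⟨c', d, hac', hc', hcd, hd, hdc.tail ⟨hcb, hc, hb⟩⟩
    · exact ⟨c, b, hac, hc, hcb, hb, .refl⟩

theorem pebSpace_le_iff {V : Type} {L : List (Finset V)} {k : ℕ} :
    pebSpace L ≤ k ↔ ∀ P ∈ L, P.card ≤ k := by
  induction L with
  | nil => simp [pebSpace]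
  | cons a L ih => simp_all [pebSpace]

theorem undirG_adj {V : Type} {T : PebSys V} {u v : V} :
    (undirG T).Adj u v ↔ u ≠ v ∧ (T.parent u = v ∨ T.parent v = u) :=
  SimpleGraph.fromRel_adj _ _ _

section Moves
variable {V W : Type} [DecidableEq V]

def Toggles (v : V) (P Q : Finset V) : Prop :=
  (v ∉ P ∧ Q = insert v P) ∨ (v ∉ Q ∧ P = insert v Q)

theorem Toggles.symm {v : V} {P Q : Finset V} (h : Toggles v P Q) : Toggles v Q P :=
  Or.symm h

theorem Toggles.mem_iff_of_ne {v x : V} {P Q : Finset V} (h : Toggles v P Q) (hx : x ≠ v) :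
    x ∈ P ↔ x ∈ Q := by
  rcases h with ⟨-, rfl⟩ | ⟨-, rfl⟩ <;> simp [hx]

theorem Toggles.eq_insert_of_notMem {v : V} {P Q : Finset V} (h : Toggles v P Q) (hv : v ∉ P) :
    Q = insert v P := by
  rcases h with ⟨-, rfl⟩ | ⟨-, rfl⟩
  · rfl
  · simp at hv

theorem Toggles.map [DecidableEq W] {v : V} {w : W} {P Q : Finset V} (h : Toggles v P Q)
    (φ : Finset V → Finset W) (hins : ∀ X, φ (insert v X) = insert w (φ X))
    (hnot : ∀ X, v ∉ X → w ∉ φ X) : Toggles w (φ P) (φ Q) := by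
  rcases h with ⟨hv, rfl⟩ | ⟨hv, rfl⟩
  · exact .inl ⟨hnot P hv, hins P⟩
  · exact .inr ⟨hnot Q hv, hins Q⟩

theorem Toggles.map_eq {v : V} {P Q : Finset V} (h : Toggles v P Q) (φ : Finset V → Finset W)
    (hins : ∀ X, φ (insert v X) = φ X) : φ P = φ Q := by
  rcases h with ⟨-, rfl⟩ | ⟨-, rfl⟩ <;> simp [hins]

theorem PebStep.symm {T : PebSys V} {P Q : Finset V} (h : PebStep T P Q) : PebStep T Q P := by
  obtain ⟨v, hv, hin⟩ := h
  refine ⟨v, Toggles.symm hv, fun u hu hp => ?_⟩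
  exact (Toggles.mem_iff_of_ne hv hu).1 (hin u hu hp)

theorem PebStep.toggles_of_mem_iff_notMem {T : PebSys V} {P Q : Finset V} {a : V}
    (h : PebStep T P Q) (ha : a ∈ P ↔ a ∉ Q) :
    Toggles a P Q ∧ ∀ u, u ≠ a → T.parent u = a → u ∈ P := by
  obtain ⟨v, hv, hin⟩ := h
  obtain rfl : a = v := by
    by_contra hav
    have := Toggles.mem_iff_of_ne hv hav
    tauto
  exact ⟨hv, hin⟩

def BoundedStep (T : PebSys V) (k : ℕ) (P Q : Finset V) : Prop :=
  PebStep T P Q ∧ P.card ≤ k ∧ Q.card ≤ k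

theorem BoundedStep.symm {T : PebSys V} {k : ℕ} {P Q : Finset V} (h : BoundedStep T k P Q) :
    BoundedStep T k Q P :=
  ⟨h.1.symm, h.2.2, h.2.1⟩

def Pebbleable (T : PebSys V) (k : ℕ) : Prop :=
  ReflTransGen (BoundedStep T k) ∅ {T.root}

theorem exists_isPebbling_iff_pebbleable (T : PebSys V) (k : ℕ) :
    (∃ L, IsPebbling T L ∧ pebSpace L ≤ k) ↔ Pebbleable T k := by
  constructor
  · rintro ⟨_ | ⟨P, l⟩, ⟨hhead, hlast, hchain⟩, hspace⟩
    · simp at hhead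
    obtain rfl : P = ∅ := by simpa using hhead
    rw [pebSpace_le_iff] at hspace
    refine List.relationReflTransGen_of_exists_isChain_cons l
      (hchain.imp_of_mem_imp fun P Q hP hQ h => ⟨h, hspace P hP, hspace Q hQ⟩) ?_
    rwa [List.getLast?_eq_some_getLast (List.cons_ne_nil _ _), Option.some_inj] at hlast
  · intro h
    obtain ⟨l, hchain, hlast⟩ := List.exists_isChain_cons_of_relationReflTransGen h
    refine ⟨∅ :: l, ⟨rfl, by rw [List.getLast?_eq_some_getLast (List.cons_ne_nil _ _), hlast],
      hchain.imp fun _ _ h => h.1⟩, pebSpace_le_iff.2 ?_⟩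
    exact hchain.induction _ _ (fun _ _ h _ => h.2.2) (fun _ => by simp)

theorem revNum_eq_sInf (T : PebSys V) : revNum T = sInf {k | Pebbleable T k} := by
  simp only [revNum, exists_isPebbling_iff_pebbleable]

theorem revNum_congr [DecidableEq W] {T : PebSys V} {T' : PebSys W}
    (h : ∀ k, Pebbleable T k ↔ Pebbleable T' k) : revNum T = revNum T' := by
  simp only [revNum_eq_sInf, h]

end Moves

section Reroot
variable {V : Type} [DecidableEq V]

def PebSys.reroot (T : PebSys V) (c : V) : PebSys V :=
  ⟨c, fun v => if v = c ∨ v = T.root then c else T.parent v⟩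

theorem reroot_parent_eq_iff_of_ne {T : PebSys V} {c u v : V} (hv : v ≠ c) :
    (T.reroot c).parent u = v ↔ T.parent u = v ∧ u ≠ c ∧ u ≠ T.root := by
  simp only [PebSys.reroot]
  split_ifs <;> grind

theorem reroot_parent_eq_self_iff {T : PebSys V} {c u : V} :
    (T.reroot c).parent u = c ↔ u = c ∨ u = T.root ∨ T.parent u = c := by
  simp only [PebSys.reroot]
  split_ifs <;> grind

variable {T : PebSys V} {c : V} {k : ℕ} {P Q : Finset V}

theorem BoundedStep.reroot_erase (h : BoundedStep T k P Q) :
    ReflTransGen (BoundedStep (T.reroot c) k) (P.erase c) (Q.erase c) := by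
  obtain ⟨⟨v, hv, hin⟩, hP, hQ⟩ := h
  by_cases hvc : v = c
  · subst hvc
    rw [Toggles.map_eq hv (·.erase v) fun X => Finset.erase_insert_eq_erase X v]
  refine .single ⟨⟨v, Toggles.map hv (·.erase c) (fun X => Finset.erase_insert_of_ne hvc)
    (fun X hX => by simp [hX]), fun u hu hpu => ?_⟩, ?_, ?_⟩
  · obtain ⟨hpu, huc, -⟩ := (reroot_parent_eq_iff_of_ne hvc).1 hpu
    exact Finset.mem_erase.2 ⟨huc, hin u hu hpu⟩
  · exact (Finset.card_erase_le).trans hP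
  · exact (Finset.card_erase_le).trans hQ

theorem BoundedStep.reroot_of_root_mem (h : BoundedStep T k P Q) (hP : T.root ∈ P)
    (hQ : T.root ∈ Q) : BoundedStep (T.reroot c) k P Q := by
  obtain ⟨⟨v, hv, hin⟩, hPk, hQk⟩ := h
  have hvr : v ≠ T.root := by
    rintro rfl
    rcases hv with ⟨h, -⟩ | ⟨h, -⟩ <;> contradiction
  refine ⟨⟨v, hv, fun u hu hpu => ?_⟩, hPk, hQk⟩
  by_cases hvc : v = c
  · subst hvc
    rcases reroot_parent_eq_self_iff.1 hpu with rfl | rfl | hpu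
    · exact absurd rfl hu
    · exact hP
    · exact hin u hu hpu
  · exact hin u hu ((reroot_parent_eq_iff_of_ne hvc).1 hpu).1

theorem BoundedStep.reroot_swap_root (h : BoundedStep T k P Q) (hP : T.root ∈ P)
    (hQ : T.root ∈ Q) :
    ReflTransGen (BoundedStep (T.reroot c) k)
      (insert c (P.erase T.root)) (insert c (Q.erase T.root)) := by
  obtain ⟨⟨v, hv, hin⟩, hPk, hQk⟩ := h
  have hvr : v ≠ T.root := by
    rintro rfl
    rcases hv with ⟨h, -⟩ | ⟨h, -⟩ <;> contradiction
  have hcard : ∀ C : Finset V, T.root ∈ C → (insert c (C.erase T.root)).card ≤ C.card :=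
    fun C hC => (Finset.card_insert_le _ _).trans
      (by rw [Finset.card_erase_add_one hC])
  by_cases hvc : v = c
  · subst hvc
    rw [Toggles.map_eq hv (fun X => insert v (X.erase T.root)) fun X => by
      rw [Finset.erase_insert_of_ne hvr, Finset.insert_idem]]
  refine .single ⟨⟨v, Toggles.map hv (fun X => insert c (X.erase T.root))
    (fun X => by rw [Finset.erase_insert_of_ne hvr, Finset.insert_comm])
    (fun X hX => by simp [hX, hvc]), fun u hu hpu => ?_⟩,
    (hcard P hP).trans hPk, (hcard Q hQ).trans hQk⟩
  obtain ⟨hpu, -, hur⟩ := (reroot_parent_eq_iff_of_ne hvc).1 hpu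
  exact Finset.mem_insert_of_mem (Finset.mem_erase.2 ⟨hur, hin u hu hpu⟩)

theorem Pebbleable.reroot (hc : T.parent c = T.root) (hne : c ≠ T.root) (h : Pebbleable T k) :
    Pebbleable (T.reroot c) k := by
  obtain ⟨C, R, hpre, hrC, hstep, hrR, hseg⟩ :=
    h.exists_last_entry (p := (T.root ∈ ·)) (by simp) (by simp)
  obtain ⟨hR, hinr⟩ := hstep.1.toggles_of_mem_iff_notMem (a := T.root) (by simp [hrC, hrR])
  obtain rfl := hR.eq_insert_of_notMem hrC
  have hcC : c ∈ C := hinr c hne hc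
  obtain ⟨D, E, hRD, hcD, hDE, hcE, -⟩ :=
    hseg.exists_last_entry (p := (c ∉ ·)) (by simp [hcC]) (by simp [hne])
  rw [not_not] at hcD
  have hinc := (hDE.1.1.toggles_of_mem_iff_notMem (a := c) (by simp [hcD, hcE])).2
  have hDk : D.card ≤ k := hDE.1.2.1
  have reach_erase : ReflTransGen (BoundedStep (T.reroot c) k) ∅ (D.erase c) := by
    simpa [Function.onFun] using ReflTransGen.lift' (·.erase c) (fun _ _ h => h.reroot_erase) _ _
      ((hpre.tail hstep).trans (ReflTransGen.mono (fun _ _ h => h.1) _ _ hRD))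
  have place_c : BoundedStep (T.reroot c) k (D.erase c) D := by
    refine ⟨⟨c, .inl ⟨Finset.notMem_erase c D, (Finset.insert_erase hcD).symm⟩,
      fun u hu hpu => Finset.mem_erase.2 ⟨hu, ?_⟩⟩, Finset.card_erase_le.trans hDk, hDk⟩
    rcases reroot_parent_eq_self_iff.1 hpu with rfl | rfl | hpu
    · exact absurd rfl hu
    · exact hDE.2.1
    · exact hinc u hu hpu
  have back : ReflTransGen (BoundedStep (T.reroot c) k) D (insert T.root C) :=
    ReflTransGen.mono (fun _ _ h => (h.1.reroot_of_root_mem h.2.1 h.2.2).symm) _ _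
      (reflTransGen_swap.2 hRD)
  have remove_root : BoundedStep (T.reroot c) k (insert T.root C) C :=
    ⟨⟨T.root, .inr ⟨hrC, rfl⟩, fun u hu hpu => Finset.mem_insert_of_mem
      (hinr u hu ((reroot_parent_eq_iff_of_ne hne.symm).1 hpu).1)⟩,
      hstep.2.2, (Finset.card_le_card (Finset.subset_insert _ _)).trans hstep.2.2⟩
  have swapped : ReflTransGen (BoundedStep (T.reroot c) k) C {c} := by
    simpa [Function.onFun, Finset.erase_insert hrC, Finset.insert_eq_of_mem hcC] using
      ReflTransGen.lift' (fun X => insert c (X.erase T.root))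
        (fun _ _ h => h.1.reroot_swap_root h.2.1 h.2.2) _ _ hseg
  exact (((reach_erase.tail place_c).trans back).tail remove_root).trans swapped

theorem PebSys.reroot_reroot (hroot : T.parent T.root = T.root) (hc : T.parent c = T.root) :
    (T.reroot c).reroot T.root = T := by
  obtain ⟨r, p⟩ := T
  simp only [PebSys.reroot, PebSys.mk.injEq, true_and]
  funext v
  split_ifs <;> grind

theorem pebbleable_reroot_iff (hroot : T.parent T.root = T.root) (hc : T.parent c = T.root)
    (hne : c ≠ T.root) : Pebbleable (T.reroot c) k ↔ Pebbleable T k := by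
  refine ⟨fun h => ?_, fun h => h.reroot hc hne⟩
  rw [← T.reroot_reroot hroot hc]
  exact h.reroot (by simp [PebSys.reroot]) hne.symm

theorem undirG_reroot (hroot : T.parent T.root = T.root) (hc : T.parent c = T.root) :
    undirG (T.reroot c) = undirG T := by
  ext u v
  simp only [undirG_adj, PebSys.reroot]
  split_ifs <;> grind

end Reroot

section Transport
variable {V W : Type} {T : PebSys V} {k : ℕ}

def PebSys.map (e : V ≃ W) (T : PebSys V) : PebSys W :=
  ⟨e T.root, fun v => e (T.parent (e.symm v))⟩

@[simp]
theorem PebSys.map_symm_map (e : V ≃ W) (T : PebSys V) : (T.map e).map e.symm = T := by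
  simp [PebSys.map]

theorem PebSys.map_parent_root (e : V ≃ W) (h : T.parent T.root = T.root) :
    (T.map e).parent (T.map e).root = (T.map e).root := by
  simp [PebSys.map, h]

theorem undirG_map_adj (e : V ≃ W) {u v : W} :
    (undirG (T.map e)).Adj u v ↔ (undirG T).Adj (e.symm u) (e.symm v) := by
  simp only [undirG_adj, PebSys.map, ne_eq, EmbeddingLike.apply_eq_iff_eq, ← Equiv.eq_symm_apply]

variable [DecidableEq V] [DecidableEq W]

theorem BoundedStep.map (e : V ≃ W) {P Q : Finset V} (h : BoundedStep T k P Q) :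
    BoundedStep (T.map e) k (P.map e.toEmbedding) (Q.map e.toEmbedding) := by
  obtain ⟨⟨v, hv, hin⟩, hP, hQ⟩ := h
  refine ⟨⟨e v, Toggles.map hv (·.map e.toEmbedding) (fun X => Finset.map_insert ..)
    (fun X hX => by simpa using hX), fun u hu hpu => ?_⟩, by simpa using hP, by simpa using hQ⟩
  rw [Finset.mem_map_equiv]
  exact hin _ (by simpa [Equiv.symm_apply_eq] using hu) (by simpa [PebSys.map] using hpu)

theorem Pebbleable.map (e : V ≃ W) (h : Pebbleable T k) : Pebbleable (T.map e) k := by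
  simpa [Pebbleable, Function.onFun, PebSys.map] using
    ReflTransGen.lift (·.map e.toEmbedding) (fun _ _ h => h.map e) _ _ h

theorem pebbleable_map_iff (e : V ≃ W) : Pebbleable (T.map e) k ↔ Pebbleable T k :=
  ⟨fun h => by simpa using h.map e.symm, (·.map e)⟩

end Transport

section Trees
variable {V : Type} [Fintype V] {T T' : PebSys V}

theorem IsRDTree.eq_root_of_parent_eq (hT : IsRDTree T) {v : V} (h : T.parent v = v) :
    v = T.root := by
  obtain ⟨n, hn⟩ := hT.2 v
  rwa [Function.iterate_fixed h] at hn

theorem IsRDTree.parent_eq_self_of_parent_parent_eq (hT : IsRDTree T) {v : V}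
    (h : T.parent (T.parent v) = v) : T.parent v = v := by
  obtain ⟨n, hn⟩ := hT.2 v
  rw [← Function.IsPeriodicPt.iterate_mod_apply (n := 2) h] at hn
  rcases Nat.mod_two_eq_zero_or_one n with h0 | h1
  · simp only [h0, Function.iterate_zero, id_eq] at hn
    rw [hn, hT.1]
  · simp only [h1, Function.iterate_one] at hn
    calc T.parent v = T.parent T.root := hn.trans hT.1.symm
      _ = v := by rw [← hn, h]

theorem IsRDTree.eq_of_undirG_eq (hT : IsRDTree T) (hT' : T'.parent T'.root = T'.root)
    (hG : undirG T' = undirG T) (hr : T'.root = T.root) : T' = T := by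
  have hroot : T'.parent T.root = T.parent T.root := by rw [← hr, hT', hr, hT.1]
  have hparent : ∀ v, T'.parent v = T.parent v := by
    intro v
    obtain ⟨n, hn⟩ := hT.2 v
    induction n generalizing v with
    | zero => simp only [Function.iterate_zero, id_eq] at hn; rw [hn, hroot]
    | succ n ih =>
      by_cases hvr : v = T.root
      · rw [hvr, hroot]
      have hw : T.parent v ≠ v := fun h => hvr (hT.eq_root_of_parent_eq h)
      have hadj : (undirG T').Adj v (T.parent v) := hG ▸ undirG_adj.2 ⟨hw.symm, .inl rfl⟩
      rcases (undirG_adj.1 hadj).2 with h | h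
      · exact h
      · rw [ih _ (by rwa [← Function.iterate_succ_apply])] at h
        exact absurd (hT.parent_eq_self_of_parent_parent_eq h) hw
  cases T'
  cases T
  simp only [PebSys.mk.injEq] at hr ⊢
  exact ⟨hr, funext hparent⟩

theorem IsRDTree.pebbleable_iff_of_undirG_eq [DecidableEq V] (hT : IsRDTree T)
    (hT' : T'.parent T'.root = T'.root) (hG : undirG T' = undirG T) (k : ℕ) :
    Pebbleable T' k ↔ Pebbleable T k := by
  obtain ⟨m, hm⟩ := hT.2 T'.root
  induction m generalizing T' with
  | zero => rw [hT.eq_of_undirG_eq hT' hG hm]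
  | succ m ih =>
    by_cases hr : T'.root = T.root
    · rw [hT.eq_of_undirG_eq hT' hG hr]
    have hadj : (undirG T').Adj T'.root (T.parent T'.root) :=
      hG ▸ undirG_adj.2 ⟨fun h => hr (hT.eq_root_of_parent_eq h.symm), .inl rfl⟩
    obtain ⟨hne, hc⟩ :
        T.parent T'.root ≠ T'.root ∧ T'.parent (T.parent T'.root) = T'.root := by
      rcases undirG_adj.1 hadj with ⟨hne, h | h⟩
      · exact absurd (hT'.symm.trans h) hne
      · exact ⟨hne.symm, h⟩
    rw [← pebbleable_reroot_iff hT' hc hne]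
    exact ih (by simp [PebSys.reroot]) ((undirG_reroot hT' hc).trans hG)
      (by rwa [Function.iterate_succ_apply] at hm)

end Trees

/-- If two rooted directed trees have isomorphic underlying
undirected trees, then they have the same persistent reversible pebbling
number: `rev` does not depend on edge orientations or the choice of root. -/
theorem rev_eq_of_undir_iso {V₁ V₂ : Type} [Fintype V₁] [DecidableEq V₁]
    [Fintype V₂] [DecidableEq V₂] (T₁ : PebSys V₁) (T₂ : PebSys V₂)
    (h₁ : IsRDTree T₁) (h₂ : IsRDTree T₂)
    (hiso : Nonempty (undirG T₁ ≃g undirG T₂)) :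
    revNum T₁ = revNum T₂ := by
  obtain ⟨e⟩ := hiso
  have hG : undirG (T₂.map e.toEquiv.symm) = undirG T₁ := by
    ext u v
    simpa [undirG_map_adj] using e.map_adj_iff
  refine revNum_congr fun k => ?_
  rw [← h₁.pebbleable_iff_of_undirG_eq (T₂.map_parent_root _ h₂.1) hG, pebbleable_map_iff]
end

section
/- There exists an absolute constant C > 0 such that for every real ε with 0 < ε ≤ 1 there is an integer h₀ such that for all h ≥ h₀, the complete binary tree Bt_h admits a reversible pebbling using at most (1 + ε)·h pebbles and at most n^{C · (log₂(1/ε) + 1)} steps, where n = 2^h − 1 is the number of vertices of Bt_h. -/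
/-- The complete binary tree of height `h` (every root-to-leaf path has `h`
nodes), on the `2 ^ h - 1` vertices `0, …, 2 ^ h - 2` in heap order: the root
is `0` and the parent of vertex `i > 0` is `(i - 1) / 2`; all edges are
directed toward the root. -/
def BtSys (h : ℕ) (hpos : 0 < 2 ^ h - 1) : PebSys (Fin (2 ^ h - 1)) where
  root := ⟨0, hpos⟩
  parent := fun i =>
    ⟨(i.val - 1) / 2, lt_of_le_of_lt (le_trans (Nat.div_le_self _ _) (Nat.sub_le _ _)) i.isLt⟩

/-!
Pebble the root of `Bt_h` by walking down left spines. Suppose every right sibling hanging off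
the left spine of `N` is pebbled and the last spine vertex has `m` levels below it. Pebble the
right child `c` of the last spine vertex (a subproblem with an empty spine), extend the spine by
its left child, pebble `N` recursively, and unpebble `c` by replaying its moves backwards. Each
level thus adds one held pebble; once the spine reaches the leaves it is a path, which Bennett's
halving strategy pebbles with `log₂ h + 1` extra pebbles. This gives `h + log₂ h + 1 ≤ (1 + ε) h`
pebbles for large `h`, and since each level at most triples the number of moves, at most
`3 ^ (2h - 1) + 1 ≤ n ^ 8` configurations.
-/

namespace Pebbling

open Finset

variable {V : Type}

def Movable (T : PebSys V) (P : Finset V) (v : V) : Prop :=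
  ∀ u, u ≠ v → T.parent u = v → u ∈ P

lemma Movable.mono {T : PebSys V} {P Q : Finset V} {v : V} (h : Movable T P v)
    (hPQ : P ⊆ Q) : Movable T Q v :=
  fun u hne hu => hPQ (h u hne hu)

/-- Bennett's halving strategy for the path `x (b - 1) → ⋯ → x a`. -/
def bennett (x : ℕ → V) (a b : ℕ) : List V :=
  if b ≤ a + 1 then [x a]
  else bennett x ((a + b) / 2) b ++ bennett x a ((a + b) / 2) ++
    (bennett x ((a + b) / 2) b).reverse
termination_by b - a

lemma mem_bennett {x : ℕ → V} {a b : ℕ} (hab : a < b) {v : V} (hv : v ∈ bennett x a b) :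
    ∃ i, a ≤ i ∧ i < b ∧ x i = v := by
  rw [bennett] at hv
  split_ifs at hv with hba
  · exact ⟨a, le_rfl, hab, (List.mem_singleton.mp hv).symm⟩
  · simp only [List.mem_append, List.mem_reverse] at hv
    rcases hv with (hv | hv) | hv
    · obtain ⟨i, hci, hib, rfl⟩ := mem_bennett (by omega) hv; exact ⟨i, by omega, hib, rfl⟩
    · obtain ⟨i, hai, hic, rfl⟩ := mem_bennett (by omega) hv; exact ⟨i, hai, by omega, rfl⟩
    · obtain ⟨i, hci, hib, rfl⟩ := mem_bennett (by omega) hv; exact ⟨i, by omega, hib, rfl⟩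
termination_by b - a

lemma length_bennett_le (x : ℕ → V) (a b : ℕ) : (bennett x a b).length ≤ 3 ^ (b - a) := by
  rw [bennett]
  split_ifs with hba
  · simp [Nat.one_le_pow]
  · have h₁ := length_bennett_le x ((a + b) / 2) b
    have h₂ := length_bennett_le x a ((a + b) / 2)
    have h₃ : 3 ^ (b - (a + b) / 2) ≤ 3 ^ (b - a - 1) :=
      Nat.pow_le_pow_right (by norm_num) (by omega)
    have h₄ : 3 ^ ((a + b) / 2 - a) ≤ 3 ^ (b - a - 1) :=
      Nat.pow_le_pow_right (by norm_num) (by omega)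
    have h₅ : 3 ^ (b - a) = 3 * 3 ^ (b - a - 1) := by rw [← pow_succ']; congr 1; omega
    simp only [List.length_append, List.length_reverse]
    omega
termination_by b - a

variable [DecidableEq V] (T : PebSys V)

def run (P : Finset V) (ms : List V) : Finset V :=
  ms.foldl (fun Q v => symmDiff Q {v}) P

def trace : Finset V → List V → List (Finset V)
  | P, [] => [P]
  | P, v :: ms => P :: trace (symmDiff P {v}) ms

def Legal : Finset V → List V → Prop
  | _, [] => True
  | P, v :: ms => Movable T P v ∧ Legal (symmDiff P {v}) ms

def Computes (P : Finset V) (ms : List V) (v : V) (s : ℕ) : Prop :=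
  Legal T P ms ∧ run P ms = insert v P ∧ pebSpace (trace P ms) ≤ s

variable {T}

@[simp] lemma run_nil (P : Finset V) : run P [] = P := rfl

@[simp] lemma run_cons (P : Finset V) (v : V) (ms : List V) :
    run P (v :: ms) = run (symmDiff P {v}) ms := rfl

lemma run_append (P : Finset V) (l₁ l₂ : List V) :
    run P (l₁ ++ l₂) = run (run P l₁) l₂ :=
  List.foldl_append ..

lemma run_run_reverse (P : Finset V) (ms : List V) : run (run P ms) ms.reverse = P := by
  induction ms generalizing P with
  | nil => rfl
  | cons v ms ih => simp [run_append, ih, symmDiff_symmDiff_cancel_right]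

lemma symmDiff_singleton_union {P E : Finset V} {v : V} (hv : v ∉ E) :
    symmDiff (P ∪ E) {v} = symmDiff P {v} ∪ E := by
  ext u
  by_cases hu : u = v
  · subst hu; simp [mem_symmDiff, hv]
  · simp [mem_symmDiff, hu]

lemma run_union {P E : Finset V} {ms : List V} (hE : ∀ v ∈ ms, v ∉ E) :
    run (P ∪ E) ms = run P ms ∪ E := by
  induction ms generalizing P with
  | nil => rfl
  | cons v ms ih =>
    simp only [run_cons, symmDiff_singleton_union (hE v (by simp))]
    exact ih fun u hu => hE u (by simp [hu])

@[simp] lemma legal_nil (P : Finset V) : Legal T P [] := trivial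

lemma legal_cons {P : Finset V} {v : V} {ms : List V} :
    Legal T P (v :: ms) ↔ Movable T P v ∧ Legal T (symmDiff P {v}) ms := Iff.rfl

lemma legal_append {P : Finset V} {l₁ l₂ : List V} :
    Legal T P (l₁ ++ l₂) ↔ Legal T P l₁ ∧ Legal T (run P l₁) l₂ := by
  induction l₁ generalizing P with
  | nil => simp
  | cons v l₁ ih => simp [legal_cons, ih, and_assoc]

lemma Movable.symmDiff_self {P : Finset V} {v : V} (h : Movable T P v) :
    Movable T (symmDiff P {v}) v :=
  fun u hne hu => by simpa [mem_symmDiff, hne] using h u hne hu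

lemma Legal.reverse {P : Finset V} {ms : List V} (h : Legal T P ms) :
    Legal T (run P ms) ms.reverse := by
  induction ms generalizing P with
  | nil => trivial
  | cons v ms ih =>
    obtain ⟨hv, hms⟩ := h
    rw [List.reverse_cons, legal_append, run_cons, run_run_reverse]
    exact ⟨ih hms, hv.symmDiff_self, trivial⟩

lemma Legal.union {P E : Finset V} {ms : List V} (h : Legal T P ms) (hE : ∀ v ∈ ms, v ∉ E) :
    Legal T (P ∪ E) ms := by
  induction ms generalizing P with
  | nil => trivial
  | cons v ms ih =>
    obtain ⟨hv, hms⟩ := h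
    refine ⟨hv.mono subset_union_left, ?_⟩
    rw [symmDiff_singleton_union (hE v (by simp))]
    exact ih hms fun u hu => hE u (by simp [hu])

@[simp] lemma pebSpace_trace_nil (P : Finset V) : pebSpace (trace P []) = P.card :=
  max_eq_left (Nat.zero_le _)

lemma pebSpace_trace_cons (P : Finset V) (v : V) (ms : List V) :
    pebSpace (trace P (v :: ms)) = max P.card (pebSpace (trace (symmDiff P {v}) ms)) := rfl

lemma card_le_pebSpace_trace (P : Finset V) (ms : List V) : P.card ≤ pebSpace (trace P ms) := by
  cases ms with
  | nil => simp
  | cons v ms => exact le_max_left _ _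

lemma pebSpace_trace_append (P : Finset V) (l₁ l₂ : List V) :
    pebSpace (trace P (l₁ ++ l₂)) =
      max (pebSpace (trace P l₁)) (pebSpace (trace (run P l₁) l₂)) := by
  induction l₁ generalizing P with
  | nil => simp [max_eq_right (card_le_pebSpace_trace P l₂)]
  | cons v l₁ ih => simp only [List.cons_append, pebSpace_trace_cons, run_cons, ih, max_assoc]

lemma pebSpace_trace_reverse (P : Finset V) (ms : List V) :
    pebSpace (trace (run P ms) ms.reverse) = pebSpace (trace P ms) := by
  induction ms generalizing P with
  | nil => rfl
  | cons v ms ih =>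
    rw [List.reverse_cons, pebSpace_trace_append, run_cons, ih, run_run_reverse,
      pebSpace_trace_cons, pebSpace_trace_cons, pebSpace_trace_nil,
      symmDiff_symmDiff_cancel_right]
    have := card_le_pebSpace_trace (symmDiff P {v}) ms
    omega

lemma pebSpace_trace_union_le {P E : Finset V} {ms : List V} (hE : ∀ v ∈ ms, v ∉ E) :
    pebSpace (trace (P ∪ E) ms) ≤ pebSpace (trace P ms) + E.card := by
  induction ms generalizing P with
  | nil => simpa using card_union_le P E
  | cons v ms ih =>
    rw [pebSpace_trace_cons, pebSpace_trace_cons, symmDiff_singleton_union (hE v (by simp))]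
    have := ih (P := symmDiff P {v}) fun u hu => hE u (by simp [hu])
    have := card_union_le P E
    omega

lemma Movable.pebStep {P : Finset V} {v : V} (h : Movable T P v) :
    PebStep T P (symmDiff P {v}) := by
  refine ⟨v, ?_, h⟩
  by_cases hv : v ∈ P
  · right
    refine ⟨by simp [mem_symmDiff, hv], ?_⟩
    ext u; by_cases hu : u = v <;> simp [mem_symmDiff, hu, hv]
  · left
    refine ⟨hv, ?_⟩
    ext u; by_cases hu : u = v <;> simp [mem_symmDiff, hu, hv]

lemma Legal.isChain_trace {P : Finset V} {ms : List V} (h : Legal T P ms) :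
    (trace P ms).IsChain (PebStep T) := by
  induction ms generalizing P with
  | nil => exact List.isChain_singleton _
  | cons v ms ih =>
    cases ms with
    | nil => exact List.IsChain.cons_cons h.1.pebStep (List.isChain_singleton _)
    | cons w ms => exact List.IsChain.cons_cons h.1.pebStep (ih h.2)

lemma head?_trace (P : Finset V) (ms : List V) : (trace P ms).head? = some P := by
  cases ms <;> rfl

lemma getLast?_trace (P : Finset V) (ms : List V) : (trace P ms).getLast? = some (run P ms) := by
  induction ms generalizing P with
  | nil => rfl
  | cons v ms ih =>
    cases ms with
    | nil => rfl
    | cons w ms => simpa [trace] using ih (symmDiff P {v})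

lemma length_trace (P : Finset V) (ms : List V) : (trace P ms).length = ms.length + 1 := by
  induction ms generalizing P with
  | nil => rfl
  | cons v ms ih => simp [trace, ih]

lemma subset_of_mem_trace {P Q : Finset V} {ms : List V} (hQ : Q ∈ trace P ms) :
    Q ⊆ P ∪ ms.toFinset := by
  induction ms generalizing P with
  | nil => simp_all [trace]
  | cons v ms ih =>
    rcases List.mem_cons.mp hQ with rfl | hQ
    · exact subset_union_left
    · refine (ih hQ).trans fun u hu => ?_
      simp only [mem_union, mem_symmDiff, mem_singleton, List.mem_toFinset, List.mem_cons] at hu ⊢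
      tauto

namespace Computes

lemma mono {P : Finset V} {ms : List V} {v : V} {s t : ℕ} (h : Computes T P ms v s)
    (hst : s ≤ t) : Computes T P ms v t :=
  ⟨h.1, h.2.1, h.2.2.trans hst⟩

lemma singleton {P : Finset V} {v : V} (hv : Movable T P v) (hvP : v ∉ P) :
    Computes T P [v] v (P.card + 1) := by
  have hrun : symmDiff P {v} = insert v P := by
    ext u; by_cases hu : u = v <;> simp [mem_symmDiff, hu, hvP]
  refine ⟨⟨hv, trivial⟩, hrun, ?_⟩
  rw [pebSpace_trace_cons, pebSpace_trace_nil, hrun]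
  exact max_le (Nat.le_succ _) (card_insert_le _ _)

lemma union {P E : Finset V} {ms : List V} {v : V} {s : ℕ} (h : Computes T P ms v s)
    (hE : ∀ u ∈ ms, u ∉ E) : Computes T (P ∪ E) ms v (s + E.card) := by
  refine ⟨h.1.union hE, ?_, (pebSpace_trace_union_le hE).trans (by have := h.2.2; omega)⟩
  rw [run_union hE, h.2.1, insert_union]

lemma append_append_reverse {P : Finset V} {A B : List V} {x y : V} {s t : ℕ}
    (hA : Computes T P A x s) (hB : Computes T (insert x P) B y t) (hyA : y ∉ A) :
    Computes T P (A ++ B ++ A.reverse) y (max t (s + 1)) := by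
  obtain ⟨hAl, hAr, hAs⟩ := hA
  obtain ⟨hBl, hBr, hBs⟩ := hB
  have hy : ∀ u ∈ A.reverse, u ∉ ({y} : Finset V) := fun u hu => by
    rw [mem_singleton]; rintro rfl; exact hyA (List.mem_reverse.mp hu)
  have hBr' : run (run P A) B = run P A ∪ {y} := by
    rw [hAr, hBr, union_comm, ← insert_eq]
  refine ⟨?_, ?_, ?_⟩
  · rw [legal_append, legal_append, run_append, hBr']
    exact ⟨⟨hAl, hAr ▸ hBl⟩, hAl.reverse.union hy⟩
  · rw [run_append, run_append, hBr', run_union hy, run_run_reverse, union_comm, ← insert_eq]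
  · rw [pebSpace_trace_append, pebSpace_trace_append, run_append, hBr']
    have := pebSpace_trace_union_le (P := run P A) hy
    rw [pebSpace_trace_reverse, card_singleton] at this
    rw [← hAr] at hBs
    omega

lemma isPebbling {ms : List V} {s : ℕ} (h : Computes T ∅ ms T.root s) :
    IsPebbling T (trace ∅ ms) ∧ pebSpace (trace ∅ ms) ≤ s := by
  refine ⟨⟨head?_trace _ _, ?_, h.1.isChain_trace⟩, h.2.2⟩
  rw [getLast?_trace, h.2.1]
  rfl

end Computes

theorem computes_bennett {x : ℕ → V} (hx : x.Injective) {a b : ℕ} (hab : a < b)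
    {P : Finset V} (hfree : ∀ i, a ≤ i → i < b → x i ∉ P)
    (hin : ∀ i, a ≤ i → i < b → ∀ u, u ≠ x i → T.parent u = x i →
      u ∈ P ∨ (i + 1 < b ∧ u = x (i + 1)))
    {k : ℕ} (hk : b - a ≤ 2 ^ k) :
    Computes T P (bennett x a b) (x a) (P.card + k + 1) := by
  rw [bennett]
  split_ifs with hba
  · refine (Computes.singleton (fun u hu hpu => ?_) (hfree a le_rfl hab)).mono (by omega)
    exact (hin a le_rfl hab u hu hpu).resolve_right (by omega)
  · set c := (a + b) / 2
    obtain ⟨k, rfl⟩ : ∃ k', k = k' + 1 :=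
      Nat.exists_eq_succ_of_ne_zero (by rintro rfl; rw [pow_zero] at hk; omega)
    have hk' : 2 ^ (k + 1) = 2 * 2 ^ k := pow_succ' 2 k
    have hxc : x c ∉ P := hfree c (by omega) (by omega)
    have hupper : Computes T P (bennett x c b) (x c) (P.card + k + 1) :=
      computes_bennett hx (by omega) (fun i hi => hfree i (by omega))
        (fun i hi => hin i (by omega)) (by omega)
    have hlower : Computes T (insert (x c) P) (bennett x a c) (x a) (P.card + 1 + k + 1) := by
      rw [← card_insert_of_notMem hxc]
      refine computes_bennett hx (by omega) (fun i hai hic => ?_)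
        (fun i hai hic u hu hpu => ?_) (by omega)
      · simp only [mem_insert, not_or]
        exact ⟨fun h => by have := hx h; omega, hfree i hai (by omega)⟩
      · rcases hin i hai (by omega) u hu hpu with h | ⟨-, rfl⟩
        · exact Or.inl (mem_insert_of_mem h)
        · by_cases hic : i + 1 < c
          · exact Or.inr ⟨hic, rfl⟩
          · exact Or.inl (by rw [show i + 1 = c by omega]; exact mem_insert_self _ _)
    have hxa : x a ∉ bennett x c b := fun h => by
      obtain ⟨i, hci, -, hia⟩ := mem_bennett (by omega) h
      have := hx hia
      omega
    exact (hupper.append_append_reverse hlower hxa).mono (by omega)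
termination_by b - a

end Pebbling

namespace HeapTree

open Finset Pebbling

/-- The complete binary tree of height `h` in 1-based heap order: vertices `1, …, 2 ^ h - 1`,
the children of `v` being `2v` and `2v + 1`; numbers `≥ 2 ^ h` are isolated fixed points. -/
def heapTree (h : ℕ) : PebSys ℕ where
  root := 1
  parent u := if u < 2 ^ h then u / 2 else u

lemma eq_two_mul_or_of_parent_eq {h u v : ℕ} (huv : u ≠ v) (hu : (heapTree h).parent u = v) :
    u < 2 ^ h ∧ (u = 2 * v ∨ u = 2 * v + 1) := by
  simp only [heapTree] at hu
  split_ifs at hu with h'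
  · exact ⟨h', by omega⟩
  · exact absurd hu huv

def spineSiblings (N j : ℕ) : Finset ℕ := (Ico 1 j).image fun i => N * 2 ^ i + 1

lemma card_spineSiblings_le (N j : ℕ) : (spineSiblings N j).card ≤ j - 1 :=
  card_image_le.trans (by simp)

@[simp] lemma spineSiblings_one (N : ℕ) : spineSiblings N 1 = ∅ := by
  simp [spineSiblings]

lemma insert_spineSiblings {N j : ℕ} (hj : 1 ≤ j) :
    insert (N * 2 ^ j + 1) (spineSiblings N j) = spineSiblings N (j + 1) := by
  rw [spineSiblings, spineSiblings, ← insert_Ico_right_eq_Ico_add_one hj, image_insert]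

lemma lt_of_mem_spineSiblings {N j x : ℕ} (hN : 1 ≤ N) (hx : x ∈ spineSiblings N j) :
    x < N * 2 ^ j + 1 := by
  obtain ⟨i, hi, rfl⟩ := mem_image.mp hx
  have : 2 ^ i < 2 ^ j := Nat.pow_lt_pow_right one_lt_two (mem_Ico.mp hi).2
  have : N * 2 ^ i < N * 2 ^ j := Nat.mul_lt_mul_of_pos_left this hN
  omega

lemma mul_two_pow_notMem_spineSiblings (N i j : ℕ) :
    N * 2 ^ i ∉ spineSiblings N j := by
  simp only [spineSiblings, mem_image, mem_Ico, not_exists, not_and]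
  intro k hk hki
  rcases Nat.eq_zero_or_pos i with rfl | hi
  · have : N ≤ N * 2 ^ k := Nat.le_mul_of_pos_right N (by positivity)
    rw [pow_zero, mul_one] at hki
    omega
  · -- the sibling is odd, the spine vertex even
    have hk' : N * 2 ^ k = 2 * (N * 2 ^ (k - 1)) := by
      rw [← mul_left_comm, ← pow_succ']; congr 2; omega
    have hi' : N * 2 ^ i = 2 * (N * 2 ^ (i - 1)) := by
      rw [← mul_left_comm, ← pow_succ']; congr 2; omega
    omega

lemma log_two_mul_two_pow_add_one {N j : ℕ} (hN : 1 ≤ N) (hj : 1 ≤ j) :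
    Nat.log 2 (N * 2 ^ j + 1) = Nat.log 2 N + j := by
  have hlo := Nat.pow_log_le_self 2 (by omega : N ≠ 0)
  have hhi := Nat.lt_pow_succ_log_self one_lt_two N
  have h2 : 2 ≤ 2 ^ j := Nat.le_self_pow (by omega) 2
  apply Nat.log_eq_of_pow_le_of_lt_pow
  · rw [pow_add]; nlinarith
  · have : (N + 1) * 2 ^ j ≤ 2 ^ (Nat.log 2 N + 1) * 2 ^ j := Nat.mul_le_mul_right _ hhi
    rw [show Nat.log 2 N + j + 1 = Nat.log 2 N + 1 + j by ring, pow_add]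
    linarith

/-- Moves that pebble `N` when the right siblings `N * 2 ^ i + 1` (`1 ≤ i < j`) of its left spine
`N, 2N, …, N * 2 ^ (j - 1)` are pebbled and `N * 2 ^ (j - 1)` has `m` levels below it. -/
def treeMoves : ℕ → ℕ → ℕ → List ℕ
  | N, j, 0 => bennett (fun i => N * 2 ^ i) 0 j
  | N, j, m + 1 =>
    treeMoves (N * 2 ^ j + 1) 1 m ++ treeMoves N (j + 1) m ++
      (treeMoves (N * 2 ^ j + 1) 1 m).reverse

lemma length_treeMoves_le (N j m : ℕ) : (treeMoves N j m).length ≤ 3 ^ (j + 2 * m) := by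
  induction m generalizing N j with
  | zero => exact length_bennett_le _ _ _
  | succ m ih =>
    have h₁ := ih (N * 2 ^ j + 1) 1
    have h₂ := ih N (j + 1)
    have h₃ : 3 ^ (1 + 2 * m) ≤ 3 ^ (j + 1 + 2 * m) :=
      Nat.pow_le_pow_right (by norm_num) (by omega)
    have h₄ : 3 ^ (j + 2 * (m + 1)) = 3 * 3 ^ (j + 1 + 2 * m) := by ring
    simp only [treeMoves, List.length_append, List.length_reverse]
    omega

lemma mem_treeMoves {N j m h : ℕ} (hN : 1 ≤ N) (hj : 1 ≤ j)
    (hdepth : Nat.log 2 N + j + m = h) : ∀ x ∈ treeMoves N j m, N ≤ x ∧ x < 2 ^ h := by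
  induction m generalizing N j with
  | zero =>
    intro x hx
    obtain ⟨i, -, hi, rfl⟩ := mem_bennett (by omega) hx
    have hN' := Nat.lt_pow_succ_log_self one_lt_two N
    have : 2 ^ (Nat.log 2 N + 1) * 2 ^ i ≤ 2 ^ h := by
      rw [← pow_add]; exact Nat.pow_le_pow_right two_pos (by omega)
    exact ⟨Nat.le_mul_of_pos_right N (by positivity),
      lt_of_lt_of_le (Nat.mul_lt_mul_of_pos_right hN' (by positivity)) this⟩
  | succ m ih =>
    have hA : ∀ x ∈ treeMoves (N * 2 ^ j + 1) 1 m, N ≤ x ∧ x < 2 ^ h := fun x hx => by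
      have := ih (N := N * 2 ^ j + 1) (j := 1) (by omega) le_rfl
        (by rw [log_two_mul_two_pow_add_one hN hj]; omega) x hx
      have : N ≤ N * 2 ^ j := Nat.le_mul_of_pos_right N (by positivity)
      omega
    intro x hx
    simp only [treeMoves, List.mem_append, List.mem_reverse] at hx
    rcases hx with (hx | hx) | hx
    · exact hA x hx
    · exact ih hN (by omega) (by omega) x hx
    · exact hA x hx

lemma computes_spine {N j h : ℕ} (hN : 1 ≤ N) (hj : 1 ≤ j) (hdepth : Nat.log 2 N + j = h) :
    Computes (heapTree h) (spineSiblings N j) (bennett (fun i => N * 2 ^ i) 0 j) N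
      (j - 1 + Nat.log 2 h + 2) := by
  have hinj : (fun i => N * 2 ^ i).Injective := fun a b hab =>
    Nat.pow_right_injective le_rfl (Nat.eq_of_mul_eq_mul_left hN hab)
  have hk : j - 0 ≤ 2 ^ (Nat.log 2 h + 1) := by
    have := Nat.lt_pow_succ_log_self one_lt_two h
    omega
  have hleaf : 2 ^ h ≤ 2 * (N * 2 ^ (j - 1)) := by
    have := Nat.pow_log_le_self 2 (by omega : N ≠ 0)
    calc 2 ^ h = 2 ^ Nat.log 2 N * 2 ^ (j - 1 + 1) := by rw [← pow_add]; congr 1; omega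
      _ ≤ N * 2 ^ (j - 1 + 1) := Nat.mul_le_mul_right _ this
      _ = 2 * (N * 2 ^ (j - 1)) := by ring
  have := computes_bennett (T := heapTree h) hinj hj
    (fun i _ _ => mul_two_pow_notMem_spineSiblings N i j) (fun i _ hij u hu hpu => ?_) hk
  · simp only [pow_zero, mul_one] at this
    exact this.mono (by have := card_spineSiblings_le N j; omega)
  obtain ⟨hu2h, rfl | rfl⟩ := eq_two_mul_or_of_parent_eq hu hpu
  all_goals by_cases hij' : i + 1 < j
  · exact Or.inr ⟨hij', by ring⟩
  · rw [show i = j - 1 by omega] at hu2h; omega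
  · exact Or.inl (mem_image.mpr ⟨i + 1, mem_Ico.mpr ⟨by omega, hij'⟩, by ring⟩)
  · rw [show i = j - 1 by omega] at hu2h; omega

theorem computes_treeMoves {N j m h : ℕ} (hN : 1 ≤ N) (hj : 1 ≤ j)
    (hdepth : Nat.log 2 N + j + m = h) :
    Computes (heapTree h) (spineSiblings N j) (treeMoves N j m) N
      (j - 1 + m + Nat.log 2 h + 2) := by
  induction m generalizing N j with
  | zero => exact computes_spine hN hj hdepth
  | succ m ih =>
    have hN2 : N ≤ N * 2 ^ j := Nat.le_mul_of_pos_right N (by positivity)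
    have hdepth' : Nat.log 2 (N * 2 ^ j + 1) + 1 + m = h := by
      rw [log_two_mul_two_pow_add_one hN hj]; omega
    have hA := ih (by omega) le_rfl hdepth'
    have hAmem := mem_treeMoves (by omega) le_rfl hdepth'
    rw [spineSiblings_one] at hA
    have hA' := hA.union (E := spineSiblings N j) fun u hu huS => by
      have := (hAmem u hu).1
      have := lt_of_mem_spineSiblings hN huS
      omega
    rw [empty_union] at hA'
    have hB := ih hN (by omega) (by omega : Nat.log 2 N + (j + 1) + m = h)
    rw [← insert_spineSiblings hj] at hB
    have hNA : N ∉ treeMoves (N * 2 ^ j + 1) 1 m := fun hN' => by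
      have := (hAmem N hN').1
      omega
    rw [treeMoves]
    exact (hA'.append_append_reverse hB hNA).mono (by have := card_spineSiblings_le N j; omega)

/-- `BtSys h` numbers the vertices from `0`, `heapTree h` from `1`. -/
def toBt (h : ℕ) (P : Finset ℕ) : Finset (Fin (2 ^ h - 1)) :=
  univ.filter fun i => i.val + 1 ∈ P

def InRange (h : ℕ) (P : Finset ℕ) : Prop := ∀ x ∈ P, 1 ≤ x ∧ x < 2 ^ h

lemma card_toBt {h : ℕ} {P : Finset ℕ} (hP : InRange h P) : (toBt h P).card = P.card := by
  refine card_bij (fun i _ => i.val + 1) (fun i hi => (mem_filter.mp hi).2)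
    (fun i _ i' _ hii' => Fin.ext (by omega)) fun x hx => ?_
  have := hP x hx
  exact ⟨⟨x - 1, by omega⟩, by simp [toBt, show x - 1 + 1 = x by omega, hx], by simp; omega⟩

lemma toBt_insert {h v : ℕ} (hv : 1 ≤ v ∧ v < 2 ^ h) (P : Finset ℕ) :
    toBt h (insert v P) = insert ⟨v - 1, by omega⟩ (toBt h P) := by
  ext i
  have : i.val + 1 = v ↔ i.val = v - 1 := by omega
  simp [toBt, Fin.ext_iff, this]

lemma pebStep_toBt {h : ℕ} (hpos : 0 < 2 ^ h - 1) {P Q : Finset ℕ} (hP : InRange h P)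
    (hQ : InRange h Q) (hPQ : PebStep (heapTree h) P Q) :
    PebStep (BtSys h hpos) (toBt h P) (toBt h Q) := by
  obtain ⟨v, hvPQ, hmov⟩ := hPQ
  have hv : 1 ≤ v ∧ v < 2 ^ h := by
    rcases hvPQ with ⟨-, rfl⟩ | ⟨-, rfl⟩
    · exact hQ v (mem_insert_self _ _)
    · exact hP v (mem_insert_self _ _)
  refine ⟨⟨v - 1, by omega⟩, ?_, fun u hu hpu => ?_⟩
  · rcases hvPQ with ⟨hvP, rfl⟩ | ⟨hvQ, rfl⟩
    · exact Or.inl ⟨by simp [toBt, show v - 1 + 1 = v by omega, hvP], toBt_insert hv P⟩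
    · exact Or.inr ⟨by simp [toBt, show v - 1 + 1 = v by omega, hvQ], toBt_insert hv Q⟩
  · have hpu' : (u.val - 1) / 2 = v - 1 := congrArg Fin.val hpu
    have hu' : u.val ≠ v - 1 := fun h => hu (Fin.ext h)
    refine mem_filter.mpr ⟨mem_univ _, hmov _ (by omega) ?_⟩
    simp only [heapTree, show u.val + 1 < 2 ^ h by omega, if_true]
    omega

lemma isPebbling_map_toBt {h : ℕ} (hpos : 0 < 2 ^ h - 1) {L : List (Finset ℕ)}
    (hL : IsPebbling (heapTree h) L) (hrange : ∀ P ∈ L, InRange h P) :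
    IsPebbling (BtSys h hpos) (L.map (toBt h)) ∧ pebSpace (L.map (toBt h)) = pebSpace L := by
  obtain ⟨hhead, hlast, hchain⟩ := hL
  refine ⟨⟨?_, ?_, ?_⟩, ?_⟩
  · rw [List.head?_map, hhead]
    simp [toBt]
  · rw [List.getLast?_map, hlast, Option.map_some]
    congr 1
    ext i
    simp [toBt, BtSys, heapTree, Fin.ext_iff]
  · exact (List.isChain_map _).mpr
      (hchain.imp_of_mem_imp fun P Q hP hQ => pebStep_toBt hpos (hrange P hP) (hrange Q hQ))
  · simp only [pebSpace, List.map_map]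
    congr 1
    exact List.map_congr_left fun P hP => card_toBt (hrange P hP)

theorem exists_pebbling_bt (h : ℕ) (hpos : 0 < 2 ^ h - 1) :
    ∃ L : List (Finset (Fin (2 ^ h - 1))), IsPebbling (BtSys h hpos) L ∧
      pebSpace L ≤ h + Nat.log 2 h + 1 ∧ L.length ≤ 3 ^ (2 * h - 1) + 1 := by
  have hh : 1 ≤ h := Nat.one_le_iff_ne_zero.mpr fun h0 => by simp [h0] at hpos
  have hdepth : Nat.log 2 1 + 1 + (h - 1) = h := by rw [Nat.log_one_right]; omega
  have hcomp := computes_treeMoves le_rfl le_rfl hdepth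
  rw [spineSiblings_one] at hcomp
  obtain ⟨hpeb, hspace⟩ := hcomp.isPebbling
  have hrange : ∀ P ∈ trace ∅ (treeMoves 1 1 (h - 1)), InRange h P := by
    intro P hP x hx
    have := subset_of_mem_trace hP hx
    rw [empty_union, List.mem_toFinset] at this
    exact mem_treeMoves le_rfl le_rfl hdepth x this
  obtain ⟨hbt, hsp⟩ := isPebbling_map_toBt hpos hpeb hrange
  refine ⟨_, hbt, by omega, ?_⟩
  rw [List.length_map, length_trace]
  have := length_treeMoves_le 1 1 (h - 1)
  rw [show 1 + 2 * (h - 1) = 2 * h - 1 by omega] at this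
  omega

end HeapTree

open Filter Asymptotics in
lemma eventually_natLog_add_one_le {ε : ℝ} (hε : 0 < ε) :
    ∀ᶠ h : ℕ in atTop, (Nat.log 2 h + 1 : ℝ) ≤ ε * h := by
  have hlog : (fun x : ℝ => Real.logb 2 x + 1) =o[atTop] id :=
    (Real.isLittleO_log_id_atTop.const_mul_left (Real.log 2)⁻¹).add (isLittleO_const_id_atTop 1)
      |>.congr_left fun x => by simp [Real.logb, div_eq_inv_mul]
  filter_upwards [(hlog.comp_tendsto tendsto_natCast_atTop_atTop).bound hε] with h hh
  have hle := Real.natLog_le_logb h 2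
  have hpos : 0 ≤ Real.logb 2 h + 1 := by
    have : (0 : ℝ) ≤ Nat.log 2 h := Nat.cast_nonneg _
    push_cast at hle; linarith
  simp only [Function.comp, id, Real.norm_eq_abs, abs_of_nonneg hpos, Nat.abs_cast] at hh
  push_cast at hle
  linarith

lemma three_pow_add_one_le {h : ℕ} (hh : 2 ≤ h) : 3 ^ (2 * h - 1) + 1 ≤ (2 ^ h - 1) ^ 8 := by
  have h₁ : 3 ^ (2 * h - 1) < 4 ^ (2 * h - 1) := Nat.pow_lt_pow_left (by norm_num) (by omega)
  have h₂ : 4 ^ (2 * h - 1) ≤ (2 ^ (h - 1)) ^ 8 := by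
    rw [show (4 : ℕ) = 2 ^ 2 by norm_num, ← pow_mul, ← pow_mul]
    exact Nat.pow_le_pow_right two_pos (by omega)
  have h₃ : 2 ^ (h - 1) ≤ 2 ^ h - 1 := by
    have : 2 ^ h = 2 * 2 ^ (h - 1) := by rw [← pow_succ']; congr 1; omega
    have := Nat.one_le_two_pow (n := h - 1)
    omega
  exact h₁.trans_le (h₂.trans (Nat.pow_le_pow_left h₃ 8))

/-- There is an absolute constant `C > 0` such that for
every real `ε` with `0 < ε ≤ 1` there is a threshold `h₀` such that for all
`h ≥ h₀` the complete binary tree `Bt_h` has a reversible pebbling using at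
most `(1 + ε) · h` pebbles and at most `n ^ (C · (log₂(1/ε) + 1))` steps,
where `n = 2 ^ h - 1` is the number of vertices.  (The threshold is stated as
`h₀ + 1 ≤ h`, i.e. `h` larger than some `h₀`, which in particular forces
`h ≥ 1`.) -/
theorem bt_almost_optimal_pebbling_poly_time :
    ∃ C : ℝ, 0 < C ∧ ∀ ε : ℝ, 0 < ε → ε ≤ 1 →
      ∃ h₀ : ℕ, ∀ (h : ℕ) (hh : h₀ + 1 ≤ h),
        ∃ L : List (Finset (Fin (2 ^ h - 1))),
          IsPebbling (BtSys h
            (by have : 1 < 2 ^ h := Nat.one_lt_two_pow_iff.mpr (by omega); omega)) L ∧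
          (pebSpace L : ℝ) ≤ (1 + ε) * h ∧
          (L.length : ℝ) ≤ ((2 ^ h - 1 : ℕ) : ℝ) ^
            (C * (Real.logb 2 (1 / ε) + 1)) := by
  refine ⟨8, by norm_num, fun ε hε hε1 => ?_⟩
  obtain ⟨h₀, hh₀⟩ := Filter.eventually_atTop.mp
    ((Filter.eventually_ge_atTop 2).and (eventually_natLog_add_one_le hε))
  refine ⟨h₀, fun h hh => ?_⟩
  obtain ⟨h2, hlog⟩ := hh₀ h (by omega)
  obtain ⟨L, hL, hspace, hlength⟩ := HeapTree.exists_pebbling_bt h _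
  refine ⟨L, hL, ?_, ?_⟩
  · have : (pebSpace L : ℝ) ≤ h + (Nat.log 2 h + 1 : ℝ) := by exact_mod_cast hspace
    linarith
  · have hn : (1 : ℝ) ≤ ((2 ^ h - 1 : ℕ) : ℝ) := by
      have := Nat.one_lt_two_pow_iff.mpr (by omega : h ≠ 0)
      exact_mod_cast (by omega : 1 ≤ 2 ^ h - 1)
    have hexp : (8 : ℝ) ≤ 8 * (Real.logb 2 (1 / ε) + 1) := by
      have := Real.logb_nonneg one_lt_two ((one_le_div hε).mpr hε1)
      linarith
    calc (L.length : ℝ) ≤ ((2 ^ h - 1 : ℕ) : ℝ) ^ (8 : ℕ) := by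
          exact_mod_cast hlength.trans (three_pow_add_one_le h2)
      _ = ((2 ^ h - 1 : ℕ) : ℝ) ^ (8 : ℝ) := (Real.rpow_natCast _ 8).symm
      _ ≤ _ := Real.rpow_le_rpow_of_exponent_le hn hexp
end
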